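/- Let 𝔽_q be a finite field, α_0,…,α_d, β_1,…,β_d multiplicative characters with α_0 ≠ ε and α_i ≠ β_i for all 1 ≤ i ≤ d. Then _{d+1}F_d(α_0,…,α_d; β_1,…,β_d; t) = ᾱ_0(−t) · Π_{i=1}^d [g(α_0 β̄_i) g°(ᾱ_i) / (g°(α_0 ᾱ_i) g(β̄_i))] · _{d+1}F_d(α_0, α_0β̄_1,…,α_0β̄_d; α_0ᾱ_1,…,α_0ᾱ_d; t^{-1}) for all t ∈ 𝔽_q*. -/

import Mathlib

open scoped Classical

noncomputable instance {F : Type*} [Field F] [Fintype F] : Fintype (MulChar F ℂ) :=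
  Fintype.ofFinite _

/-- The Gauss sum `g(φ) = -Σ_{x ∈ 𝔽_q} φ(x) ψ(x)`. -/
noncomputable def gaussS {F : Type*} [Field F] [Fintype F]
    (ψ : AddChar F ℂ) (χ : MulChar F ℂ) : ℂ := -∑ x : F, χ x * ψ x

/-- The variant `g°(φ)`: `g(φ)` for `φ ≠ ε`, and `q` for `φ = ε`. -/
noncomputable def gaussS' {F : Type*} [Field F] [Fintype F]
    (ψ : AddChar F ℂ) (χ : MulChar F ℂ) : ℂ :=
  if χ = 1 then (Fintype.card F : ℂ) else gaussS ψ χ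

/-- The Pochhammer symbol `(φ)_ν = g(φν)/g(φ)`. -/
noncomputable def pochS {F : Type*} [Field F] [Fintype F]
    (ψ : AddChar F ℂ) (φ ν : MulChar F ℂ) : ℂ := gaussS ψ (φ * ν) / gaussS ψ φ

/-- The Pochhammer variant `(φ)°_ν = g°(φν)/g°(φ)`. -/
noncomputable def pochS' {F : Type*} [Field F] [Fintype F]
    (ψ : AddChar F ℂ) (φ ν : MulChar F ℂ) : ℂ := gaussS' ψ (φ * ν) / gaussS' ψ φ

/-- Otsubo's hypergeometric function over the finite field `𝔽_q`:
`_{d+1}F_d(α₀,…,α_d; β₁,…,β_d; t)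
  = (1/(1-q)) Σ_ν [(α₀)_ν ⋯ (α_d)_ν / ((ε)°_ν (β₁)°_ν ⋯ (β_d)°_ν)] ν(t)`. -/
noncomputable def hgF {F : Type*} [Field F] [Fintype F] (ψ : AddChar F ℂ) {d : ℕ}
    (α : Fin (d + 1) → MulChar F ℂ) (β : Fin d → MulChar F ℂ) (t : F) : ℂ :=
  (1 / (1 - (Fintype.card F : ℂ))) *
    ∑ ν : MulChar F ℂ,
      ((∏ i, pochS ψ (α i) ν) / (pochS' ψ 1 ν * ∏ j, pochS' ψ (β j) ν)) * ν t


section AuxLemmas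


variable {F : Type*} [Field F] [Fintype F] {ψ : AddChar F ℂ}

lemma card_ne_zero' : ((Fintype.card F : ℂ)) ≠ 0 :=
  Nat.cast_ne_zero.2 Fintype.card_ne_zero

lemma mulchar_neg_one_ne_zero (χ : MulChar F ℂ) : χ (-1 : F) ≠ 0 := by
  have h : χ (-1 : F) * χ (-1 : F) = 1 := by
    rw [← map_mul, neg_mul_neg, one_mul, MulChar.map_one]
  intro h0
  rw [h0, zero_mul] at h
  exact zero_ne_one h

lemma mulchar_inv_neg_one (χ : MulChar F ℂ) : χ⁻¹ (-1 : F) = χ (-1 : F) := by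
  rw [MulChar.inv_apply', inv_neg_one]

lemma gaussS_one (hψ : ψ ≠ 1) : gaussS ψ (1 : MulChar F ℂ) = 1 := by
  have h0 : ∑ x : F, ψ x = 0 := by
    rw [AddChar.sum_eq_zero_iff_ne_zero]
    exact hψ
  have h1 : ∀ x : F, (1 : MulChar F ℂ) x * ψ x = ψ x - (if x = 0 then 1 else 0) := by
    intro x
    by_cases hx : x = 0
    · simp [hx, MulChar.map_zero]
    · simp [hx, MulChar.one_apply (isUnit_iff_ne_zero.2 hx)]
  rw [gaussS]
  rw [Finset.sum_congr rfl fun x _ => h1 x, Finset.sum_sub_distrib, h0,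
    Finset.sum_ite_eq' Finset.univ (0 : F) (fun _ => (1 : ℂ))]
  simp

lemma gaussS_mul_gaussS' (hψ : ψ ≠ 1) (χ : MulChar F ℂ) :
    gaussS ψ χ * gaussS' ψ χ⁻¹ = χ (-1 : F) * (Fintype.card F : ℂ) := by
  by_cases h : χ = 1
  · subst h
    rw [inv_one, gaussS', if_pos rfl, gaussS_one hψ, one_mul,
      MulChar.one_apply (IsUnit.neg isUnit_one), one_mul]
  · have hp : ψ.IsPrimitive := AddChar.IsPrimitive.of_ne_one hψ
    have hinv : χ⁻¹ ≠ (1 : MulChar F ℂ) := fun hc => h (inv_eq_one.mp hc)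
    rw [gaussS', if_neg hinv]
    have key := gaussSum_mul_gaussSum_eq_card h hp
    have h2 := mul_gaussSum_inv_eq_gaussSum χ⁻¹ ψ
    have : gaussS ψ χ * gaussS ψ χ⁻¹ = gaussSum χ ψ * gaussSum χ⁻¹ ψ := by
      rw [gaussS, gaussS, gaussSum, gaussSum, neg_mul_neg]
    rw [this, ← h2, mulchar_inv_neg_one]
    calc gaussSum χ ψ * (χ (-1 : F) * gaussSum χ⁻¹ ψ⁻¹)
        = χ (-1 : F) * (gaussSum χ ψ * gaussSum χ⁻¹ ψ⁻¹) := by ring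
      _ = χ (-1 : F) * (Fintype.card F : ℂ) := by rw [key]

lemma gaussS'_mul_gaussS (hψ : ψ ≠ 1) (χ : MulChar F ℂ) :
    gaussS' ψ χ * gaussS ψ χ⁻¹ = χ (-1 : F) * (Fintype.card F : ℂ) := by
  have h := gaussS_mul_gaussS' hψ χ⁻¹
  rw [inv_inv, mulchar_inv_neg_one] at h
  rw [mul_comm]
  exact h

lemma gaussS_ne_zero (hψ : ψ ≠ 1) (χ : MulChar F ℂ) : gaussS ψ χ ≠ 0 :=
  left_ne_zero_of_mul (a := gaussS ψ χ) (b := gaussS' ψ χ⁻¹) <| by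
    rw [gaussS_mul_gaussS' hψ χ]
    exact mul_ne_zero (mulchar_neg_one_ne_zero χ) card_ne_zero'

lemma gaussS'_ne_zero (hψ : ψ ≠ 1) (χ : MulChar F ℂ) : gaussS' ψ χ ≠ 0 :=
  left_ne_zero_of_mul (a := gaussS' ψ χ) (b := gaussS ψ χ⁻¹) <| by
    rw [gaussS'_mul_gaussS hψ χ]
    exact mul_ne_zero (mulchar_neg_one_ne_zero χ) card_ne_zero'

lemma factor_div (hψ : ψ ≠ 1) (a b c ν : MulChar F ℂ) :
    pochS ψ a ν / pochS' ψ b ν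
      = gaussS ψ (c * b⁻¹) * gaussS' ψ a⁻¹ / (gaussS' ψ (c * a⁻¹) * gaussS ψ b⁻¹) *
        (pochS ψ (c * b⁻¹) (c * ν)⁻¹ / pochS' ψ (c * a⁻¹) (c * ν)⁻¹) := by
  have e1 : (c * b⁻¹) * (c * ν)⁻¹ = b⁻¹ * ν⁻¹ := by
    rw [mul_inv, mul_mul_mul_comm, mul_inv_cancel, one_mul]
  have e2 : (c * a⁻¹) * (c * ν)⁻¹ = a⁻¹ * ν⁻¹ := by
    rw [mul_inv, mul_mul_mul_comm, mul_inv_cancel, one_mul]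
  have h1 : gaussS ψ (a * ν) * gaussS' ψ (a⁻¹ * ν⁻¹)
      = (a * ν) (-1 : F) * (Fintype.card F : ℂ) := by
    rw [← mul_inv]; exact gaussS_mul_gaussS' hψ (a * ν)
  have h2 := gaussS'_mul_gaussS hψ b
  have h3 := gaussS_mul_gaussS' hψ a
  have h4 : gaussS' ψ (b * ν) * gaussS ψ (b⁻¹ * ν⁻¹)
      = (b * ν) (-1 : F) * (Fintype.card F : ℂ) := by
    rw [← mul_inv]; exact gaussS'_mul_gaussS hψ (b * ν)
  have Ecross : gaussS ψ (a * ν) * gaussS' ψ b * (gaussS ψ b⁻¹ * gaussS' ψ (a⁻¹ * ν⁻¹))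
      = gaussS' ψ a⁻¹ * gaussS ψ (b⁻¹ * ν⁻¹) * (gaussS ψ a * gaussS' ψ (b * ν)) := by
    calc gaussS ψ (a * ν) * gaussS' ψ b * (gaussS ψ b⁻¹ * gaussS' ψ (a⁻¹ * ν⁻¹))
        = gaussS ψ (a * ν) * gaussS' ψ (a⁻¹ * ν⁻¹) * (gaussS' ψ b * gaussS ψ b⁻¹) := by ring
      _ = ((a * ν) (-1 : F) * (Fintype.card F : ℂ)) *
            ((b) (-1 : F) * (Fintype.card F : ℂ)) := by rw [h1, h2]
      _ = ((a) (-1 : F) * (Fintype.card F : ℂ)) *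
            ((b * ν) (-1 : F) * (Fintype.card F : ℂ)) := by
          simp only [MulChar.mul_apply]; ring
      _ = gaussS ψ a * gaussS' ψ a⁻¹ * (gaussS' ψ (b * ν) * gaussS ψ (b⁻¹ * ν⁻¹)) := by
          rw [h3, h4]
      _ = _ := by ring
  unfold pochS pochS'
  rw [e1, e2]
  have n1 := gaussS_ne_zero hψ (F := F) (ψ := ψ)
  have n2 := gaussS'_ne_zero hψ (F := F) (ψ := ψ)
  generalize hg1 : gaussS ψ (a * ν) = g1 at *
  generalize hg2 : gaussS ψ a = g2 at *
  generalize hg3 : gaussS' ψ (b * ν) = g3 at *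
  generalize hg4 : gaussS' ψ b = g4 at *
  generalize hg5 : gaussS ψ (b⁻¹ * ν⁻¹) = g5 at *
  generalize hg6 : gaussS ψ (c * b⁻¹) = g6 at *
  generalize hg7 : gaussS' ψ (a⁻¹ * ν⁻¹) = g7 at *
  generalize hg8 : gaussS' ψ (c * a⁻¹) = g8 at *
  generalize hg9 : gaussS' ψ a⁻¹ = g9 at *
  generalize hg10 : gaussS ψ b⁻¹ = g10 at *
  have z2 : g2 ≠ 0 := hg2 ▸ n1 a
  have z3 : g3 ≠ 0 := hg3 ▸ n2 (b * ν)
  have z6 : g6 ≠ 0 := hg6 ▸ n1 (c * b⁻¹)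
  have z7 : g7 ≠ 0 := hg7 ▸ n2 (a⁻¹ * ν⁻¹)
  have z8 : g8 ≠ 0 := hg8 ▸ n2 (c * a⁻¹)
  have z10 : g10 ≠ 0 := hg10 ▸ n1 b⁻¹
  field_simp
  linear_combination Ecross

lemma factor_zero (hψ : ψ ≠ 1) (a ν : MulChar F ℂ) (t : F) (ht : t ≠ 0) :
    pochS ψ a ν / pochS' ψ 1 ν * ν t
      = a⁻¹ (-t) *
        (pochS ψ a (a * ν)⁻¹ / pochS' ψ 1 (a * ν)⁻¹ * ((a * ν)⁻¹) t⁻¹) := by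
  have e1 : a * (a * ν)⁻¹ = ν⁻¹ := by
    rw [mul_inv, ← mul_assoc, mul_inv_cancel, one_mul]
  have e2 : (1 : MulChar F ℂ) * (a * ν)⁻¹ = a⁻¹ * ν⁻¹ := by rw [one_mul, mul_inv]
  have e3 : (1 : MulChar F ℂ) * ν = ν := one_mul ν
  have c1 : ((a * ν)⁻¹) t⁻¹ = a t * ν t := by
    rw [MulChar.inv_apply', inv_inv, MulChar.mul_apply]
  have c2 : a⁻¹ (-t) * a t = a (-1 : F) := by
    rw [MulChar.inv_apply', ← map_mul]
    congr 1
    field_simp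
  have h1 : gaussS ψ (a * ν) * gaussS' ψ (a⁻¹ * ν⁻¹)
      = a (-1 : F) * ν (-1 : F) * (Fintype.card F : ℂ) := by
    rw [← mul_inv, gaussS_mul_gaussS' hψ (a * ν), MulChar.mul_apply]
  have h2 : gaussS' ψ ν * gaussS ψ ν⁻¹ = ν (-1 : F) * (Fintype.card F : ℂ) :=
    gaussS'_mul_gaussS hψ ν
  unfold pochS pochS'
  rw [e1, e2, e3, c1]
  have hone : gaussS' ψ (1 : MulChar F ℂ) = (Fintype.card F : ℂ) := if_pos rfl
  rw [hone]
  have n1 := gaussS_ne_zero hψ (F := F) (ψ := ψ)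
  have n2 := gaussS'_ne_zero hψ (F := F) (ψ := ψ)
  have hq : ((Fintype.card F : ℂ)) ≠ 0 := Nat.cast_ne_zero.2 Fintype.card_ne_zero
  generalize hu : (a⁻¹) (-t) = u at *
  generalize hv : a t = v at *
  generalize hw : ν t = w at *
  generalize hA : a (-1 : F) = A at *
  generalize hN : ν (-1 : F) = N at *
  generalize hg1 : gaussS ψ (a * ν) = g1 at *
  generalize hg2 : gaussS ψ a = g2 at *
  generalize hg3 : gaussS' ψ ν = g3 at *
  generalize hg4 : gaussS ψ ν⁻¹ = g4 at *
  generalize hg5 : gaussS' ψ (a⁻¹ * ν⁻¹) = g5 at *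
  have z2 : g2 ≠ 0 := hg2 ▸ n1 a
  have z3 : g3 ≠ 0 := hg3 ▸ n2 ν
  have z5 : g5 ≠ 0 := hg5 ▸ n2 (a⁻¹ * ν⁻¹)
  field_simp
  linear_combination w * h1
    - (u * v * w) * h2
    - (N * (Fintype.card F : ℂ) * w) * c2

end AuxLemmas

/-- Otsubo's transformation formula between `t` and `t⁻¹`: for `α₀ ≠ ε` and `αᵢ ≠ βᵢ`
for all `1 ≤ i ≤ d`,
`_{d+1}F_d(α₀,…,α_d; β₁,…,β_d; t) = ᾱ₀(-t) · Π_i [g(α₀β̄ᵢ)g°(ᾱᵢ)/(g°(α₀ᾱᵢ)g(β̄ᵢ))] ·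
  _{d+1}F_d(α₀, α₀β̄₁,…,α₀β̄_d; α₀ᾱ₁,…,α₀ᾱ_d; t⁻¹)` for all `t ∈ 𝔽_q*`. -/

theorem finite_hypergeometric_transformation_general (F : Type*) [Field F] [Fintype F]
    (ψ : AddChar F ℂ) (hψ : ψ ≠ 1) (d : ℕ)
    (α : Fin (d + 1) → MulChar F ℂ) (β : Fin d → MulChar F ℂ)
    (hα₀ : α 0 ≠ 1) (hαβ : ∀ i : Fin d, α i.succ ≠ β i)
    (t : F) (ht : t ≠ 0) :
    hgF ψ α β t
      = (α 0)⁻¹ (-t) *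
        (∏ i : Fin d,
          gaussS ψ (α 0 * (β i)⁻¹) * gaussS' ψ (α i.succ)⁻¹ /
            (gaussS' ψ (α 0 * (α i.succ)⁻¹) * gaussS ψ (β i)⁻¹)) *
        hgF ψ (Fin.cons (α 0) (fun i : Fin d => α 0 * (β i)⁻¹))
          (fun i : Fin d => α 0 * (α i.succ)⁻¹) t⁻¹ := by
  classical
  set X : ℂ := (α 0)⁻¹ (-t) *
        (∏ i : Fin d,
          gaussS ψ (α 0 * (β i)⁻¹) * gaussS' ψ (α i.succ)⁻¹ /
            (gaussS' ψ (α 0 * (α i.succ)⁻¹) * gaussS ψ (β i)⁻¹)) with hX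
  set H : MulChar F ℂ → ℂ := fun μ =>
      ((∏ i : Fin (d + 1), pochS ψ ((Fin.cons (α 0) (fun i : Fin d => α 0 * (β i)⁻¹) : Fin (d + 1) → MulChar F ℂ) i) μ) /
        (pochS' ψ 1 μ * ∏ j : Fin d, pochS' ψ (α 0 * (α j.succ)⁻¹) μ)) * μ t⁻¹ with hH
  have key : ∀ ν : MulChar F ℂ,
      ((∏ i, pochS ψ (α i) ν) / (pochS' ψ 1 ν * ∏ j, pochS' ψ (β j) ν)) * ν t
        = X * H ((α 0 * ν)⁻¹) := by
    intro ν
    rw [hH, hX]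
    simp only [Fin.prod_univ_succ, Fin.cons_zero, Fin.cons_succ]
    have h0 := factor_zero hψ (α 0) ν t ht
    have hprod : (∏ j : Fin d, (pochS ψ (α j.succ) ν / pochS' ψ (β j) ν))
        = ∏ j : Fin d,
            (gaussS ψ (α 0 * (β j)⁻¹) * gaussS' ψ (α j.succ)⁻¹ /
              (gaussS' ψ (α 0 * (α j.succ)⁻¹) * gaussS ψ (β j)⁻¹) *
            (pochS ψ (α 0 * (β j)⁻¹) ((α 0 * ν)⁻¹) /
              pochS' ψ (α 0 * (α j.succ)⁻¹) ((α 0 * ν)⁻¹))) :=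
      Finset.prod_congr rfl fun j _ => factor_div hψ (α j.succ) (β j) (α 0) ν
    have expand : (pochS ψ (α 0) ν * ∏ i : Fin d, pochS ψ (α i.succ) ν) /
          (pochS' ψ 1 ν * ∏ j : Fin d, pochS' ψ (β j) ν) * ν t
        = (pochS ψ (α 0) ν / pochS' ψ 1 ν * ν t) *
            ∏ j : Fin d, (pochS ψ (α j.succ) ν / pochS' ψ (β j) ν) := by
      rw [Finset.prod_div_distrib]; ring
    rw [expand, h0, hprod]
    simp only [Finset.prod_mul_distrib, Finset.prod_div_distrib]
    ring
  have esum : ∑ ν : MulChar F ℂ, H ((α 0 * ν)⁻¹) = ∑ μ : MulChar F ℂ, H μ :=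
    Fintype.sum_equiv ((Equiv.mulLeft (α 0)).trans (Equiv.inv _)) _ _ fun ν => rfl
  calc hgF ψ α β t
      = (1 / (1 - (Fintype.card F : ℂ))) *
          ∑ ν : MulChar F ℂ,
            ((∏ i, pochS ψ (α i) ν) / (pochS' ψ 1 ν * ∏ j, pochS' ψ (β j) ν)) * ν t := rfl
    _ = (1 / (1 - (Fintype.card F : ℂ))) * ∑ ν : MulChar F ℂ, X * H ((α 0 * ν)⁻¹) := by
        rw [Finset.sum_congr rfl fun ν _ => key ν]
    _ = X * ((1 / (1 - (Fintype.card F : ℂ))) * ∑ ν : MulChar F ℂ, H ((α 0 * ν)⁻¹)) := by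
        rw [← Finset.mul_sum]; ring
    _ = X * ((1 / (1 - (Fintype.card F : ℂ))) * ∑ μ : MulChar F ℂ, H μ) := by rw [esum]
    _ = X * hgF ψ (Fin.cons (α 0) (fun i : Fin d => α 0 * (β i)⁻¹))
          (fun i : Fin d => α 0 * (α i.succ)⁻¹) t⁻¹ := rfl
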